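/- Let (L,[·,·],α) be a hom-Lie superalgebra over a field K of characteristic not equal to 2 admitting T*-extensions, let ω₁ and ω₂ be two supercyclic even 2-cocycles, and let z : L → L* be an even linear map satisfying ω₁(x,y) - ω₂(x,y) = π(x)z(y) - (-1)^{|x||y|}π(y)z(x) - z([x,y]) for all homogeneous x,y ∈ L. Then the supersymmetric part z_s of z, defined by z_s(x)(y) := (1/2)(z(x)(y) + (-1)^{|x||y|}z(y)(x)), induces an invariant supersymmetric bilinear form on L; that is, the bilinear form q(x,y) := z_s(x)(y) satisfies q([x,y],m) = q(x,[y,m]) for all homogeneous x,y,m ∈ L. -/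

import Mathlib

open Module

/-- The sign `(-1)^{ij}` for degrees `i j : ZMod 2`, valued in the field `K`. -/
def sgn (K : Type*) [Field K] (i j : ZMod 2) : K := (-1 : K) ^ (i.val * j.val)

/-- The raw data of a hom-Lie superalgebra on a `K`-vector space `L`:
a `ZMod 2`-grading, a bilinear bracket and a linear map `α`. -/
structure HomLieSuperData (K : Type*) [Field K] (L : Type*) [AddCommGroup L] [Module K L] where
  grading : ZMod 2 → Submodule K L
  bracket : L →ₗ[K] L →ₗ[K] L
  alpha : L →ₗ[K] L

namespace HomLieSuperData

variable {K : Type*} [Field K] {L : Type*} [AddCommGroup L] [Module K L]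

/-- The axioms making the data of `HomLieSuperData` into a hom-Lie superalgebra. -/
structure IsHomLieSuper (D : HomLieSuperData K L) : Prop where
  internal : DirectSum.IsInternal D.grading
  bracket_even : ∀ i j : ZMod 2, ∀ x ∈ D.grading i, ∀ y ∈ D.grading j,
    D.bracket x y ∈ D.grading (i + j)
  alpha_even : ∀ i : ZMod 2, ∀ x ∈ D.grading i, D.alpha x ∈ D.grading i
  skew : ∀ i j : ZMod 2, ∀ x ∈ D.grading i, ∀ y ∈ D.grading j,
    D.bracket x y = -(sgn K i j) • D.bracket y x
  jacobi : ∀ i j k : ZMod 2, ∀ x ∈ D.grading i, ∀ y ∈ D.grading j, ∀ z ∈ D.grading k,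
    sgn K i k • D.bracket (D.alpha x) (D.bracket y z)
      + sgn K i j • D.bracket (D.alpha y) (D.bracket z x)
      + sgn K j k • D.bracket (D.alpha z) (D.bracket x y) = 0

/-- `D` is multiplicative if `α` is a morphism for the bracket. -/
def IsMultiplicative (D : HomLieSuperData K L) : Prop :=
  ∀ x y : L, D.alpha (D.bracket x y) = D.bracket (D.alpha x) (D.alpha y)

end HomLieSuperData

namespace HomLieSuperData

variable {K : Type*} [Field K] {L : Type*} [AddCommGroup L] [Module K L]

/-- The induced grading on the dual space: `(L*)_i` consists of the functionals
vanishing on every `L_j` with `j ≠ i`. -/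
def dualGrading (D : HomLieSuperData K L) (i : ZMod 2) : Submodule K (Module.Dual K L) where
  carrier := {f | ∀ j : ZMod 2, j ≠ i → ∀ x ∈ D.grading j, f x = 0}
  add_mem' := fun hf hg j hj x hx => by simp [hf j hj x hx, hg j hj x hx]
  zero_mem' := fun j hj x hx => rfl
  smul_mem' := fun c f hf j hj x hx => by simp [hf j hj x hx]

/-- The coadjoint action on homogeneous elements: for `x` of degree `i` and `f` of degree
`j`, `π(x) f = -(-1)^{ij} f ∘ ad(x)`. -/
def coadj (D : HomLieSuperData K L) (i j : ZMod 2) (x : L) (f : Module.Dual K L) :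
    Module.Dual K L :=
  -(sgn K i j) • (f ∘ₗ D.bracket x)

/-- The coadjoint representation of `L` on `L*` exists, i.e.
`ad(x) ∘ ad(α y) - (-1)^{|x||y|} ad(y) ∘ ad(α x) = α ∘ ad([x,y])` on homogeneous elements. -/
def HasCoadjRep (D : HomLieSuperData K L) : Prop :=
  ∀ i j : ZMod 2, ∀ x ∈ D.grading i, ∀ y ∈ D.grading j, ∀ m : L,
    D.bracket x (D.bracket (D.alpha y) m) - sgn K i j • D.bracket y (D.bracket (D.alpha x) m)
      = D.alpha (D.bracket (D.bracket x y) m)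

/-- `ω : L × L → L*` is even: `ω(L_i, L_j) ⊆ (L*)_{i+j}`. -/
def OmegaEven (D : HomLieSuperData K L) (ω : L →ₗ[K] L →ₗ[K] Module.Dual K L) : Prop :=
  ∀ i j : ZMod 2, ∀ x ∈ D.grading i, ∀ y ∈ D.grading j, ω x y ∈ dualGrading D (i + j)

/-- `ω` is super-skewsymmetric. -/
def OmegaSkew (D : HomLieSuperData K L) (ω : L →ₗ[K] L →ₗ[K] Module.Dual K L) : Prop :=
  ∀ i j : ZMod 2, ∀ x ∈ D.grading i, ∀ y ∈ D.grading j, ω x y = -(sgn K i j) • ω y x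

/-- The 2-cocycle identity for `ω` with respect to the coadjoint representation. -/
def OmegaCocycle (D : HomLieSuperData K L) (ω : L →ₗ[K] L →ₗ[K] Module.Dual K L) : Prop :=
  ∀ i j k : ZMod 2, ∀ x ∈ D.grading i, ∀ y ∈ D.grading j, ∀ z ∈ D.grading k,
    coadj D i (j + k) (D.alpha x) (ω y z)
      - sgn K i j • coadj D j (i + k) (D.alpha y) (ω x z)
      + sgn K (i + j) k • coadj D k (i + j) (D.alpha z) (ω x y)
      + ω (D.alpha x) (D.bracket y z)
      + sgn K j k • ω (D.bracket x z) (D.alpha y)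
      - ω (D.bracket x y) (D.alpha z) = 0

/-- `ω` is supercyclic: `ω(x,y)(z) = (-1)^{|x|(|y|+|z|)} ω(y,z)(x)`. -/
def OmegaSupercyclic (D : HomLieSuperData K L) (ω : L →ₗ[K] L →ₗ[K] Module.Dual K L) : Prop :=
  ∀ i j k : ZMod 2, ∀ x ∈ D.grading i, ∀ y ∈ D.grading j, ∀ z ∈ D.grading k,
    ω x y z = sgn K i (j + k) * ω y z x

/-- A bilinear bracket `Bext` on `L ⊕ L*` is the `T*`-extension bracket associated to `ω`
if on homogeneous elements
`[x+f, y+g] = [x,y] + ω(x,y) + π(x) g - (-1)^{|x||y|} π(y) f`. -/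
def IsExtBracket (D : HomLieSuperData K L) (ω : L →ₗ[K] L →ₗ[K] Module.Dual K L)
    (Bext : (L × Module.Dual K L) →ₗ[K] (L × Module.Dual K L) →ₗ[K] (L × Module.Dual K L)) :
    Prop :=
  ∀ (i j : ZMod 2) (x y : L) (f g : Module.Dual K L),
    x ∈ D.grading i → f ∈ dualGrading D i → y ∈ D.grading j → g ∈ dualGrading D j →
      Bext (x, f) (y, g) =
        (D.bracket x y, ω x y + coadj D i j x g - sgn K i j • coadj D j i y f)

/-- The `T*`-extension data on `L ⊕ L*` with a given bracket `Bext`: the grading is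
`(L ⊕ L*)_i = L_i ⊕ (L*)_i` and the structure map is `α'(x+f) = α(x) + f ∘ α`. -/
def extData (D : HomLieSuperData K L)
    (Bext : (L × Module.Dual K L) →ₗ[K] (L × Module.Dual K L) →ₗ[K] (L × Module.Dual K L)) :
    HomLieSuperData K (L × Module.Dual K L) where
  grading i := (D.grading i).prod (dualGrading D i)
  bracket := Bext
  alpha := D.alpha.prodMap D.alpha.dualMap

/-- The derived series `L^(0) = L`, `L^(n+1) = [L^(n), L^(n)]`. -/
def derivedSeries (D : HomLieSuperData K L) : ℕ → Submodule K L
  | 0 => ⊤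
  | n + 1 => Submodule.span K
      {z | ∃ x ∈ derivedSeries D n, ∃ y ∈ derivedSeries D n, z = D.bracket x y}

/-- The central descending series `L^0 = L`, `L^{n+1} = [L^n, L]`. -/
def lowerCentral (D : HomLieSuperData K L) : ℕ → Submodule K L
  | 0 => ⊤
  | n + 1 => Submodule.span K {z | ∃ x ∈ lowerCentral D n, ∃ y : L, z = D.bracket x y}

/-- `D` is solvable of length exactly `k`. -/
def IsSolvableOfLength (D : HomLieSuperData K L) (k : ℕ) : Prop :=
  derivedSeries D k = ⊥ ∧ ∀ m < k, derivedSeries D m ≠ ⊥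

/-- `D` is nilpotent of length exactly `k`. -/
def IsNilpotentOfLength (D : HomLieSuperData K L) (k : ℕ) : Prop :=
  lowerCentral D k = ⊥ ∧ ∀ m < k, lowerCentral D m ≠ ⊥

end HomLieSuperData

lemma sgn_comm (K : Type*) [Field K] (i j : ZMod 2) : sgn K i j = sgn K j i := by
  simp [sgn, Nat.mul_comm]

lemma sgn_mul_self (K : Type*) [Field K] (i j : ZMod 2) : sgn K i j * sgn K i j = 1 := by
  rw [sgn, ← pow_add]
  exact Even.neg_one_pow ⟨_, rfl⟩

lemma sgn_add_right (K : Type*) [Field K] (i j k : ZMod 2) :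
    sgn K i (j + k) = sgn K i j * sgn K i k := by
  rw [sgn, sgn, sgn, ← pow_add, ← Nat.mul_add, ZMod.val_add, neg_one_pow_eq_pow_mod_two,
    neg_one_pow_eq_pow_mod_two (n := i.val * (j.val + k.val)), Nat.mul_mod, Nat.mod_mod,
    ← Nat.mul_mod]

lemma sgn_add_left (K : Type*) [Field K] (i j k : ZMod 2) :
    sgn K (i + j) k = sgn K i k * sgn K j k := by
  rw [sgn_comm, sgn_add_right, sgn_comm K k i, sgn_comm K k j]

namespace HomLieSuperData

variable {K : Type*} [Field K] {L : Type*} [AddCommGroup L] [Module K L]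
  {D : HomLieSuperData K L}

@[simp]
lemma coadj_apply (i j : ZMod 2) (x : L) (f : Module.Dual K L) (m : L) :
    D.coadj i j x f m = -(sgn K i j * f (D.bracket x m)) := by
  simp [coadj]

lemma apply_eq_of_eq_coboundary {z : L →ₗ[K] Module.Dual K L} {i j : ZMod 2} {x y : L}
    {w : Module.Dual K L}
    (hw : w = D.coadj i j x (z y) - sgn K i j • D.coadj j i y (z x) - z (D.bracket x y))
    (m : L) :
    w m = z x (D.bracket y m) - sgn K i j * z y (D.bracket x m) - z (D.bracket x y) m := by
  have hsq : sgn K i j * sgn K j i = 1 := by rw [sgn_comm K j i, sgn_mul_self]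
  rw [hw]
  simp only [LinearMap.sub_apply, LinearMap.smul_apply, coadj_apply, smul_eq_mul]
  linear_combination z x (D.bracket y m) * hsq

/-- Evaluate `ω₁ - ω₂ = δz` at `(x, y, m)` and at `(y, m, x)`: supercyclicity equates the two,
the terms in `z(y)[x,m]` cancel, and what is left is the invariance identity. -/
lemma bracket_invariant_of_supercyclic_sub_eq_coboundary
    (hskew : ∀ i j : ZMod 2, ∀ x ∈ D.grading i, ∀ y ∈ D.grading j,
      D.bracket x y = -(sgn K i j) • D.bracket y x)
    {ω₁ ω₂ : L →ₗ[K] L →ₗ[K] Module.Dual K L}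
    (hω₁cyc : D.OmegaSupercyclic ω₁) (hω₂cyc : D.OmegaSupercyclic ω₂)
    {z : L →ₗ[K] Module.Dual K L}
    (hz : ∀ i j : ZMod 2, ∀ x ∈ D.grading i, ∀ y ∈ D.grading j,
      ω₁ x y - ω₂ x y =
        D.coadj i j x (z y) - sgn K i j • D.coadj j i y (z x) - z (D.bracket x y))
    {i j k : ZMod 2} {x y m : L} (hx : x ∈ D.grading i) (hy : y ∈ D.grading j)
    (hm : m ∈ D.grading k) :
    z (D.bracket x y) m + sgn K (i + j) k * z m (D.bracket x y) =
      z x (D.bracket y m) + sgn K i (j + k) * z (D.bracket y m) x := by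
  have hcyc : ω₁ x y m - ω₂ x y m = sgn K i (j + k) * (ω₁ y m x - ω₂ y m x) := by
    rw [hω₁cyc i j k x hx y hy m hm, hω₂cyc i j k x hx y hy m hm]
    ring
  have hxy := apply_eq_of_eq_coboundary (hz i j x hx y hy) m
  have hym := apply_eq_of_eq_coboundary (hz j k y hy m hm) x
  rw [hskew k i m hm x hx, hskew j i y hy x hx] at hym
  simp only [LinearMap.sub_apply, map_smul, smul_eq_mul] at hxy hym
  rw [sgn_comm K k i, sgn_comm K j i] at hym
  simp only [sgn_add_left, sgn_add_right] at hcyc ⊢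
  have hij := sgn_mul_self K i j
  have hik := sgn_mul_self K i k
  linear_combination hxy - hcyc - sgn K i j * sgn K i k * hym
    + sgn K i j * z y (D.bracket x m) * hik - sgn K i k * sgn K j k * z m (D.bracket x y) * hij

end HomLieSuperData

theorem supersymmetric_part_invariant_general {K : Type*} [Field K]
    {L : Type*} [AddCommGroup L] [Module K L]
    (D : HomLieSuperData K L) (hD : D.IsHomLieSuper)
    (ω₁ ω₂ : L →ₗ[K] L →ₗ[K] Module.Dual K L)
    (hω₁cyc : D.OmegaSupercyclic ω₁)
    (hω₂cyc : D.OmegaSupercyclic ω₂)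
    (z : L →ₗ[K] Module.Dual K L)
    (hz : ∀ i j : ZMod 2, ∀ x ∈ D.grading i, ∀ y ∈ D.grading j,
      ω₁ x y - ω₂ x y =
        D.coadj i j x (z y) - sgn K i j • D.coadj j i y (z x) - z (D.bracket x y)) :
    ∀ i j k : ZMod 2, ∀ x ∈ D.grading i, ∀ y ∈ D.grading j, ∀ m ∈ D.grading k,
      (1 / 2 : K) * (z (D.bracket x y) m + sgn K (i + j) k * z m (D.bracket x y)) =
        (1 / 2 : K) * (z x (D.bracket y m) + sgn K i (j + k) * z (D.bracket y m) x) := by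
  intro i j k x hx y hy m hm
  rw [HomLieSuperData.bracket_invariant_of_supercyclic_sub_eq_coboundary hD.skew hω₁cyc hω₂cyc hz
    hx hy hm]

/-- If `z : L → L*` is an even linear map with
`ω₁(x,y) - ω₂(x,y) = π(x)z(y) - (-1)^{|x||y|} π(y)z(x) - z([x,y])` for two supercyclic even
2-cocycles `ω₁, ω₂`, then the supersymmetric part
`z_s(x)(y) = ½(z(x)(y) + (-1)^{|x||y|} z(y)(x))` of `z` induces an invariant supersymmetric
bilinear form on `L`: `q([x,y], m) = q(x, [y,m])` on homogeneous elements. -/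
theorem supersymmetric_part_invariant {K : Type*} [Field K]
    {L : Type*} [AddCommGroup L] [Module K L] (hchar : (2 : K) ≠ 0)
    (D : HomLieSuperData K L) (hD : D.IsHomLieSuper) (hco : D.HasCoadjRep)
    (ω₁ ω₂ : L →ₗ[K] L →ₗ[K] Module.Dual K L)
    (hω₁even : D.OmegaEven ω₁) (hω₁skew : D.OmegaSkew ω₁) (hω₁coc : D.OmegaCocycle ω₁)
    (hω₁cyc : D.OmegaSupercyclic ω₁)
    (hω₂even : D.OmegaEven ω₂) (hω₂skew : D.OmegaSkew ω₂) (hω₂coc : D.OmegaCocycle ω₂)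
    (hω₂cyc : D.OmegaSupercyclic ω₂)
    (z : L →ₗ[K] Module.Dual K L)
    (hzeven : ∀ i : ZMod 2, ∀ x ∈ D.grading i, z x ∈ D.dualGrading i)
    (hz : ∀ i j : ZMod 2, ∀ x ∈ D.grading i, ∀ y ∈ D.grading j,
      ω₁ x y - ω₂ x y =
        D.coadj i j x (z y) - sgn K i j • D.coadj j i y (z x) - z (D.bracket x y)) :
    ∀ i j k : ZMod 2, ∀ x ∈ D.grading i, ∀ y ∈ D.grading j, ∀ m ∈ D.grading k,
      (1 / 2 : K) * (z (D.bracket x y) m + sgn K (i + j) k * z m (D.bracket x y)) =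
        (1 / 2 : K) * (z x (D.bracket y m) + sgn K i (j + k) * z (D.bracket y m) x) :=
  supersymmetric_part_invariant_general D hD ω₁ ω₂ hω₁cyc hω₂cyc z hz
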